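/- Under the assumptions of the previous setting (Ruspini, 2-overlapping, strongly normal, min-convex, and additionally each f_i strictly min-convex on its support), for each i the restrictions of f_i and f_{i+1} to [t_i, t_{i+1}] are injective, hence bijective onto [0,1]. -/

import Mathlib

/-!
Quasiconcavity makes each support `{f k > 0}` an interval containing the peak `t k`; since
`f k` vanishes at every other peak, on `[t i, t (i+1)]` only `f i` and `f (i+1)` survive, so
they sum to `1` there. Strict min-convexity, with the maximum `1` attained at `t i`, forces `f i`
to decrease strictly towards `t (i+1)` wherever it is positive, and symmetrically `f (i+1)` to
increase strictly away from `t i`; through `f i + f (i+1) = 1` this makes `f i` strictly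
antitone on the whole interval. Injectivity follows, and the intermediate value theorem
between the values `1` and `0` at the two ends gives surjectivity.
-/

open Set

theorem eq_zero_of_sum_eq_one_of_eq_one {ι : Type*} [Fintype ι] {g : ι → ℝ}
    (hg : ∀ i, 0 ≤ g i) (hsum : ∑ i, g i = 1) {k m : ι} (hm : g m = 1) (hkm : k ≠ m) :
    g k = 0 := by
  classical
  have hle : g k + g m ≤ ∑ i, g i := by
    rw [← Finset.sum_pair hkm]
    exact Finset.sum_le_univ_sum_of_nonneg hg
  linarith [hg k]

theorem quasiconcaveOn_of_min_le {f : ℝ → ℝ} {s : Set ℝ} (hs : Convex ℝ s)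
    (h : ∀ x ∈ s, ∀ y ∈ s, ∀ l ∈ Icc (0 : ℝ) 1,
      min (f x) (f y) ≤ f (l * x + (1 - l) * y)) :
    QuasiconcaveOn ℝ s f :=
  quasiconcaveOn_iff_min_le.2 ⟨hs, fun x hx y hy l m hl _ hlm => by
    obtain rfl : m = 1 - l := by linarith
    exact h x hx y hy l ⟨hl, by linarith⟩⟩

theorem QuasiconcaveOn.eq_zero_of_mem_segment {E : Type*} [AddCommGroup E] [Module ℝ E]
    {s : Set E} {f : E → ℝ} (hq : QuasiconcaveOn ℝ s f) (hf : ∀ x ∈ s, 0 ≤ f x)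
    {p a x : E} (hp : p ∈ s) (hfp : 0 < f p) (hx : x ∈ s) (hfa : f a = 0)
    (ha : a ∈ segment ℝ p x) : f x = 0 := by
  by_contra hne
  have hpos := (hq.convex_gt 0).segment_subset ⟨hp, hfp⟩ ⟨hx, (hf x hx).lt_of_ne' hne⟩ ha
  exact hpos.2.ne' hfa

theorem QuasiconcaveOn.eq_zero_on_Icc {f : ℝ → ℝ} {s : Set ℝ} (hq : QuasiconcaveOn ℝ s f)
    (hf : ∀ x ∈ s, 0 ≤ f x) {p a b x : ℝ} (hp : p ∈ s) (hfp : 0 < f p)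
    (hfa : f a = 0) (hfb : f b = 0) (hpab : p < a ∨ b < p) (hx : x ∈ s) (hxab : x ∈ Icc a b) :
    f x = 0 := by
  rcases hpab with hpa | hbp
  · refine hq.eq_zero_of_mem_segment hf hp hfp hx hfa ?_
    rw [segment_eq_Icc (hpa.le.trans hxab.1)]
    exact ⟨hpa.le, hxab.1⟩
  · refine hq.eq_zero_of_mem_segment hf hp hfp hx hfb ?_
    rw [segment_symm, segment_eq_Icc (hxab.2.trans hbp.le)]
    exact ⟨hxab.2, hbp.le⟩

theorem min_lt_of_mem_openSegment {f : ℝ → ℝ} {T : Set ℝ}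
    (hstrict : ∀ x y : ℝ, x < y → Icc x y ⊆ T → ∀ l : ℝ, 0 < l → l < 1 →
      min (f x) (f y) < f (l * x + (1 - l) * y))
    {u v z : ℝ} (huv : u ≠ v) (hT : segment ℝ u v ⊆ T) (hz : z ∈ openSegment ℝ u v) :
    min (f u) (f v) < f z := by
  obtain ⟨a, b, ha, hb, hab, rfl⟩ := hz
  obtain rfl : b = 1 - a := by linarith
  rcases huv.lt_or_gt with huv | hvu
  · rw [segment_eq_Icc huv.le] at hT
    simpa using hstrict u v huv hT a ha (by linarith)
  · rw [segment_symm, segment_eq_Icc hvu.le] at hT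
    rw [min_comm]
    convert hstrict v u hvu hT (1 - a) hb (by linarith) using 2
    simp only [smul_eq_mul]
    ring

theorem strictAntiOn_of_add_eq_one {g h : ℝ → ℝ} {I : Set ℝ}
    (hsum : ∀ x ∈ I, g x + h x = 1)
    (hg : ∀ x ∈ I, ∀ y ∈ I, x < y → 0 < g y → g y < g x)
    (hh : ∀ x ∈ I, ∀ y ∈ I, x < y → 0 < h x → h x < h y) : StrictAntiOn g I := by
  intro x hx y hy hxy
  by_contra! hle
  rcases lt_or_ge 0 (g y) with hpos | hnonpos
  · exact (hg x hx y hy hxy hpos).not_ge hle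
  · have hhxy := hh x hx y hy hxy (by linarith [hsum x hx])
    linarith [hsum x hx, hsum y hy]

theorem sum_eq_add_of_consecutive_peaks {n : ℕ} {s : Set ℝ} {f : Fin n → ℝ → ℝ}
    {t : Fin n → ℝ} (hmono : StrictMono t) (hq : ∀ k, QuasiconcaveOn ℝ s (f k))
    (hf : ∀ k, ∀ x ∈ s, 0 ≤ f k x) (ht : ∀ k, t k ∈ s) (hpos : ∀ k, 0 < f k (t k))
    (hvanish : ∀ k m, k ≠ m → f k (t m) = 0) {i j : Fin n} (hij : (j : ℕ) = i + 1)
    {x : ℝ} (hx : x ∈ s) (hxI : x ∈ Icc (t i) (t j)) : ∑ k, f k x = f i x + f j x := by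
  refine Fintype.sum_eq_add i j (Fin.ne_of_val_ne (by omega)) fun k ⟨hki, hkj⟩ => ?_
  have hk : k < i ∨ j < k := by
    have := Fin.val_ne_of_ne hki
    have := Fin.val_ne_of_ne hkj
    rw [Fin.lt_def, Fin.lt_def]
    omega
  exact (hq k).eq_zero_on_Icc (hf k) (ht k) (hpos k) (hvanish k i hki) (hvanish k j hkj)
    (hk.imp (hmono ·) (hmono ·)) hx hxI

section StrictPeak

variable {f : ℝ → ℝ} {s : Set ℝ} (hq : QuasiconcaveOn ℝ s f)
    (hstrict : ∀ x y : ℝ, x < y → Icc x y ⊆ {z | z ∈ s ∧ 0 < f z} →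
      ∀ l : ℝ, 0 < l → l < 1 → min (f x) (f y) < f (l * x + (1 - l) * y))
    {a : ℝ} (ha : a ∈ s) (hmax : IsMaxOn f s a)
include hq hstrict ha hmax

theorem lt_of_mem_segment_of_isMaxOn {x y : ℝ} (hy : y ∈ s) (hfy : 0 < f y)
    (hx : x ∈ segment ℝ a y) (hxy : x ≠ y) : f y < f x := by
  have hya : f y ≤ f a := hmax hy
  have hay : a ≠ y := by
    rintro rfl
    exact hxy (by simpa using hx)
  have hsupp : segment ℝ a y ⊆ {z | z ∈ s ∧ 0 < f z} :=
    (hq.convex_gt 0).segment_subset ⟨ha, hfy.trans_le hya⟩ ⟨hy, hfy⟩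
  have hinner : ∀ z ∈ openSegment ℝ a y, f y < f z := fun z hz =>
    min_eq_right hya ▸ min_lt_of_mem_openSegment hstrict hay hsupp hz
  rw [← insert_endpoints_openSegment] at hx
  rcases hx with rfl | rfl | hx
  · have hmid := midpoint_mem_openSegment (𝕜 := ℝ) x y
    exact (hinner _ hmid).trans_le <| hmax (hsupp (openSegment_subset_segment _ _ _ hmid)).1
  · exact absurd rfl hxy
  · exact hinner x hx

theorem lt_of_isMaxOn_of_le_of_lt {x y : ℝ} (hy : y ∈ s) (hfy : 0 < f y) (hax : a ≤ x)
    (hxy : x < y) : f y < f x :=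
  lt_of_mem_segment_of_isMaxOn hq hstrict ha hmax hy hfy
    (by rw [segment_eq_Icc (hax.trans hxy.le)]; exact ⟨hax, hxy.le⟩) hxy.ne

theorem lt_of_isMaxOn_of_lt_of_le {x y : ℝ} (hx : x ∈ s) (hfx : 0 < f x) (hxy : x < y)
    (hya : y ≤ a) : f x < f y :=
  lt_of_mem_segment_of_isMaxOn hq hstrict ha hmax hx hfx
    (by rw [segment_symm, segment_eq_Icc (hxy.le.trans hya)]; exact ⟨hxy.le, hya⟩) hxy.ne'

end StrictPeak

/-- For a 2-overlapping Ruspini partition of continuous fuzzy sets, each strongly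
normal (peak `t i`, `0 = t_1 < ⋯ < t_n = 1`), min-convex, and strictly min-convex
on its support, the restrictions of `f i` and `f (i+1)` to `[t_i, t_{i+1}]` are
bijective onto `[0,1]`. -/
theorem stmt10 (n : ℕ) (hn : 2 ≤ n) (f : Fin n → ℝ → ℝ)
    (hcont : ∀ i, ContinuousOn (f i) (Set.Icc 0 1))
    (hmap : ∀ i, Set.MapsTo (f i) (Set.Icc 0 1) (Set.Icc 0 1))
    (hruspini : ∀ x ∈ Set.Icc (0:ℝ) 1, ∑ i : Fin n, f i x = 1)
    (t : Fin n → ℝ) (hmono : StrictMono t)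
    (ht0 : t ⟨0, by omega⟩ = 0)
    (ht1 : t ⟨n - 1, by omega⟩ = 1)
    (hpeak : ∀ i, f i (t i) = 1)
    (hconv : ∀ i, ∀ x ∈ Set.Icc (0:ℝ) 1, ∀ y ∈ Set.Icc (0:ℝ) 1,
      ∀ l ∈ Set.Icc (0:ℝ) 1, min (f i x) (f i y) ≤ f i (l * x + (1 - l) * y))
    (hsconv : ∀ i, ∀ x y : ℝ, x < y →
      Set.Icc x y ⊆ {z | z ∈ Set.Icc (0:ℝ) 1 ∧ 0 < f i z} →
      ∀ l : ℝ, 0 < l → l < 1 → min (f i x) (f i y) < f i (l * x + (1 - l) * y)) :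
    ∀ i : Fin n, ∀ hi : (i : ℕ) + 1 < n,
      Set.BijOn (f i) (Set.Icc (t i) (t ⟨(i : ℕ) + 1, hi⟩)) (Set.Icc 0 1) ∧
      Set.BijOn (f ⟨(i : ℕ) + 1, hi⟩)
        (Set.Icc (t i) (t ⟨(i : ℕ) + 1, hi⟩)) (Set.Icc 0 1) := by
  intro i hi
  set j : Fin n := ⟨i + 1, hi⟩
  have hij : i < j := Fin.lt_def.2 (Nat.lt_succ_self _)
  have ht : ∀ k, t k ∈ Icc (0 : ℝ) 1 := fun k =>
    ⟨ht0 ▸ hmono.monotone (Fin.le_def.2 (Nat.zero_le _)),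
      ht1 ▸ hmono.monotone (Fin.le_def.2 (Nat.le_sub_one_of_lt k.isLt))⟩
  have hq k : QuasiconcaveOn ℝ (Icc 0 1) (f k) :=
    quasiconcaveOn_of_min_le (convex_Icc 0 1) (hconv k)
  have hmax k : IsMaxOn (f k) (Icc 0 1) (t k) := fun x hx => (hpeak k).symm ▸ (hmap k hx).2
  have hvanish k m (hkm : k ≠ m) : f k (t m) = 0 :=
    eq_zero_of_sum_eq_one_of_eq_one (fun l => (hmap l (ht m)).1) (hruspini _ (ht m)) (hpeak m) hkm
  have hI : Icc (t i) (t j) ⊆ Icc 0 1 := Icc_subset_Icc (ht i).1 (ht j).2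
  have hsum : ∀ x ∈ Icc (t i) (t j), f i x + f j x = 1 := fun x hx => by
    rw [← hruspini x (hI hx), sum_eq_add_of_consecutive_peaks hmono hq
      (fun k y hy => (hmap k hy).1) ht (fun k => by simp [hpeak]) hvanish rfl (hI hx) hx]
  have hanti : StrictAntiOn (f i) (Icc (t i) (t j)) := strictAntiOn_of_add_eq_one hsum
    (fun x hx y hy hxy hfy =>
      lt_of_isMaxOn_of_le_of_lt (hq i) (hsconv i) (ht i) (hmax i) (hI hy) hfy hx.1 hxy)
    (fun x hx y hy hxy hfx =>
      lt_of_isMaxOn_of_lt_of_le (hq j) (hsconv j) (ht j) (hmax j) (hI hx) hfx hxy hy.2)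
  have hincr : StrictMonoOn (f j) (Icc (t i) (t j)) := fun x hx y hy hxy => by
    linarith [hanti hx hy hxy, hsum x hx, hsum y hy]
  refine ⟨⟨fun x hx => hmap i (hI hx), hanti.injOn, ?_⟩,
    ⟨fun x hx => hmap j (hI hx), hincr.injOn, ?_⟩⟩
  · have h := intermediate_value_Icc' (hmono hij).le ((hcont i).mono hI)
    rwa [hvanish i j hij.ne, hpeak i] at h
  · have h := intermediate_value_Icc (hmono hij).le ((hcont j).mono hI)
    rwa [hvanish j i hij.ne', hpeak j] at h
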